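/- Let K = Matrix.fromBlocks 0 B C D, where the upper-left block is the n×n zero matrix, D : Matrix (Fin m) (Fin m) ℂ is normal (IsStarNormal), B : Matrix (Fin n) (Fin m) ℂ and C : Matrix (Fin m) (Fin n) ℂ, with n, m ≥ 1. Let γ > 0 and w ≥ 0 be real numbers, and assume: every eigenvalue μ ∈ spectrum ℂ D satisfies |μ| ≤ Real.exp (−(w+1)·γ); ‖B‖ ≤ Real.exp (−(w/2+1)·γ); and ‖C‖ ≤ Real.exp (−(w/2+1)·γ), where ‖·‖ is the ℓ²-operator norm. Then every eigenvalue λ ∈ spectrum ℂ K satisfies |λ| ≤ Real.exp (−(w/2+1)·γ) · (1 + Real.exp (−w·γ/2)). (This is the quantitative matrix core of the paper's Lemma 2: a weight-w eigenmode-free circuit with end-of-period depolarization of strength γ has spectral radius at most e^{−(w/2+1)γ}(1 + e^{−wγ/2}), hence Liouvillian gap at least (w/2+1)γ in the strong-dissipation regime.) -/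

import Mathlib

/-!
Write `a` for the bound on `‖B‖, ‖C‖` and `b` for the bound on the eigenvalues of `D`, and suppose
`|λ| > a + b`. Then `λ - D` is invertible and, `D` being normal, `‖(λ - D)⁻¹‖ ≤ (|λ| - b)⁻¹ < a⁻¹`.
By the Schur complement, `λ` is an eigenvalue of `B (λ - D)⁻¹ C`, whose norm is at most
`a² / (|λ| - b) < a < |λ|`, a contradiction. Finally `e^{-(w/2+1)γ} e^{-wγ/2} = e^{-(w+1)γ}`,
so `a + b` is exactly the stated bound.
-/

/-- The ℓ²-operator norm of a (rectangular) complex matrix: the operator norm of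
the induced linear map between Euclidean spaces. -/
noncomputable def l2OpNorm {m n : Type*} [Fintype m] [Fintype n] [DecidableEq n]
    (M : Matrix m n ℂ) : ℝ :=
  ‖LinearMap.toContinuousLinearMap (Matrix.toEuclideanLin M)‖

theorem IsStarNormal.norm_resolvent_le {A : Type*} [CStarAlgebra A] {a : A} [IsStarNormal a]
    {z : ℂ} {r : ℝ} (hr : 0 < r) (h : ∀ μ ∈ spectrum ℂ a, r ≤ ‖z - μ‖) :
    ‖resolvent a z‖ ≤ r⁻¹ := by
  have hne : ∀ μ ∈ spectrum ℂ a, z - μ ≠ 0 := fun μ hμ ↦ norm_pos_iff.mp (hr.trans_le (h μ hμ))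
  have hcfc : resolvent a z = cfc (fun μ ↦ (z - μ)⁻¹) a := by
    rw [cfc_inv (fun μ ↦ z - μ) a hne, cfc_sub (fun _ ↦ z) (fun μ ↦ μ) a, cfc_const z a,
      cfc_id' ℂ a, resolvent]
  rw [hcfc]
  refine norm_cfc_le (inv_nonneg.mpr hr.le) fun μ hμ ↦ ?_
  rw [norm_inv]
  exact inv_anti₀ hr (h μ hμ)

theorem Matrix.mem_spectrum_schur_of_mem_spectrum_fromBlocks {R n m : Type*} [CommRing R]
    [Fintype n] [Fintype m] [DecidableEq n] [DecidableEq m] {A : Matrix n n R}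
    {B : Matrix n m R} {C : Matrix m n R} {D : Matrix m m R} {z : R}
    (hK : z ∈ spectrum R (Matrix.fromBlocks A B C D)) (hD : z ∉ spectrum R D) :
    z ∈ spectrum R (A + B * resolvent D z * C) := by
  have := (spectrum.notMem_iff.mp hD).invertible
  have hsplit : algebraMap R _ z - Matrix.fromBlocks A B C D =
      Matrix.fromBlocks (algebraMap R _ z - A) (-B) (-C) (algebraMap R _ z - D) := by
    simp only [Algebra.algebraMap_eq_smul_one, ← Matrix.fromBlocks_one, Matrix.fromBlocks_smul,
      sub_eq_add_neg, Matrix.fromBlocks_neg, Matrix.fromBlocks_add, smul_zero, zero_add]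
  rw [spectrum.mem_iff, hsplit, Matrix.isUnit_fromBlocks_iff_of_invertible₂₂] at hK
  rw [spectrum.mem_iff, resolvent, Ring.inverse_invertible, ← sub_sub]
  simpa only [Matrix.neg_mul, Matrix.mul_neg, neg_neg] using hK

open scoped Matrix.Norms.L2Operator

theorem Matrix.norm_le_of_mem_spectrum_fromBlocks_zero {n m : Type*} [Fintype n] [Fintype m]
    [DecidableEq n] [DecidableEq m] {B : Matrix n m ℂ} {C : Matrix m n ℂ} {D : Matrix m m ℂ}
    [IsStarNormal D] {a b : ℝ} (hB : ‖B‖ ≤ a) (hC : ‖C‖ ≤ a) (hb : 0 ≤ b)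
    (hD : ∀ μ ∈ spectrum ℂ D, ‖μ‖ ≤ b) {z : ℂ}
    (hz : z ∈ spectrum ℂ (Matrix.fromBlocks 0 B C D)) : ‖z‖ ≤ a + b := by
  by_contra! hlt
  have ha : 0 ≤ a := (norm_nonneg B).trans hB
  have hr : a < ‖z‖ - b := by linarith
  have hgap : ∀ μ ∈ spectrum ℂ D, ‖z‖ - b ≤ ‖z - μ‖ := fun μ hμ ↦ by
    linarith [norm_sub_norm_le z μ, hD μ hμ]
  have hzD : z ∉ spectrum ℂ D := fun h ↦ by
    have := hgap z h
    rw [sub_self, norm_zero] at this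
    linarith
  have hR := IsStarNormal.norm_resolvent_le (ha.trans_lt hr) hgap
  have hschur := Matrix.mem_spectrum_schur_of_mem_spectrum_fromBlocks hz hzD
  rw [zero_add] at hschur
  -- gives `NormOneClass`, needed to bound `‖z‖` by the norm; a zero ring has empty spectrum
  have : Nontrivial (Matrix n n ℂ) := by
    by_contra h
    rw [not_nontrivial_iff_subsingleton] at h
    simp [spectrum.of_subsingleton] at hschur
  have hlt' : ‖z‖ < ‖z‖ := calc
    ‖z‖ ≤ ‖B * resolvent D z * C‖ := spectrum.norm_le_norm_of_mem hschur
    _ ≤ ‖B‖ * ‖resolvent D z‖ * ‖C‖ :=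
      (Matrix.l2_opNorm_mul _ _).trans (by gcongr; exact Matrix.l2_opNorm_mul _ _)
    _ ≤ a * (‖z‖ - b)⁻¹ * a := by gcongr; exact mul_nonneg ha (inv_nonneg.mpr (by linarith))
    _ ≤ 1 * a := by gcongr; exact mul_inv_le_one_of_le₀ hr.le (by linarith)
    _ < ‖z‖ := by linarith
  exact lt_irrefl _ hlt'

theorem gap_lower_bound_matrix_core_general {n m : ℕ}
    (B : Matrix (Fin n) (Fin m) ℂ) (C : Matrix (Fin m) (Fin n) ℂ)
    (D : Matrix (Fin m) (Fin m) ℂ) (hD : IsStarNormal D)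
    (γ w : ℝ)
    (hspecD : ∀ μ ∈ spectrum ℂ D, ‖μ‖ ≤ Real.exp (-((w + 1) * γ)))
    (hB : l2OpNorm B ≤ Real.exp (-((w / 2 + 1) * γ)))
    (hC : l2OpNorm C ≤ Real.exp (-((w / 2 + 1) * γ)))
    (lam : ℂ)
    (hK : lam ∈ spectrum ℂ (Matrix.fromBlocks (0 : Matrix (Fin n) (Fin n) ℂ) B C D)) :
    ‖lam‖ ≤ Real.exp (-((w / 2 + 1) * γ)) * (1 + Real.exp (-(w * γ / 2))) := calc
  ‖lam‖ ≤ Real.exp (-((w / 2 + 1) * γ)) + Real.exp (-((w + 1) * γ)) :=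
    Matrix.norm_le_of_mem_spectrum_fromBlocks_zero hB hC (Real.exp_nonneg _) hspecD hK
  _ = Real.exp (-((w / 2 + 1) * γ)) * (1 + Real.exp (-(w * γ / 2))) := by
    rw [mul_add, mul_one, ← Real.exp_add]
    ring_nf

/-- **Quantitative matrix core of Lemma 2 (gap lower bound).**
For `K = fromBlocks 0 B C D` with zero upper-left block and normal `D`, if all
eigenvalues of `D` have modulus at most `e^{-(w+1)γ}` and
`‖B‖, ‖C‖ ≤ e^{-(w/2+1)γ}`, then every eigenvalue `λ` of `K` satisfies
`|λ| ≤ e^{-(w/2+1)γ}(1 + e^{-wγ/2})`. -/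
theorem gap_lower_bound_matrix_core {n m : ℕ} (hn : 1 ≤ n) (hm : 1 ≤ m)
    (B : Matrix (Fin n) (Fin m) ℂ) (C : Matrix (Fin m) (Fin n) ℂ)
    (D : Matrix (Fin m) (Fin m) ℂ) (hD : IsStarNormal D)
    (γ w : ℝ) (hγ : 0 < γ) (hw : 0 ≤ w)
    (hspecD : ∀ μ ∈ spectrum ℂ D, ‖μ‖ ≤ Real.exp (-((w + 1) * γ)))
    (hB : l2OpNorm B ≤ Real.exp (-((w / 2 + 1) * γ)))
    (hC : l2OpNorm C ≤ Real.exp (-((w / 2 + 1) * γ)))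
    (lam : ℂ)
    (hK : lam ∈ spectrum ℂ (Matrix.fromBlocks (0 : Matrix (Fin n) (Fin n) ℂ) B C D)) :
    ‖lam‖ ≤ Real.exp (-((w / 2 + 1) * γ)) * (1 + Real.exp (-(w * γ / 2))) :=
  gap_lower_bound_matrix_core_general B C D hD γ w hspecD hB hC lam hK
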